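/- Every partial sum of the SFTR-1/2 weights is strictly positive: Σ_{m=0}^{n} ω_m > 0 for every integer n ≥ 0. -/

import Mathlib

/-- The SFTR-1/2 weights `ω_m`. -/
noncomputable def sftrW (α : ℝ) : ℕ → ℝ
  | 0 => (2 * α / (α + 1)) ^ α
  | 1 => -α * (2 * α / (α + 1)) ^ (α + 1)
  | (m + 2) =>
      2 * α / (((m : ℝ) + 2) * (α + 1)) *
        (((((m : ℝ) + 2) - 1) / α - α) * sftrW α (m + 1) +
          (α - 1) / (2 * α) * (((m : ℝ) + 2) - 2) * sftrW α m)

/-!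
Summing the recurrence gives `(1+α)(n+1) ω_{n+1} + 2α² S_n = (1-α) n ω_n` for the partial sums
`S_n = ω_0 + ⋯ + ω_n`. Written in the `S_n` alone, it yields `(1+α)(n+1) S_{n+1} ≥ (1-α)(n+1+2α) S_n`
whenever `(1-α) S_{n-1} ≤ (1+α) S_n`, so this inequality and `S_n > 0` propagate together.
-/

open Finset

theorem sum_range_pos_of_mul_succ_add_sum_eq {α : ℝ} (hα₀ : 0 ≤ α) (hα₁ : α < 1) {ω : ℕ → ℝ}
    (hω₀ : 0 < ω 0)
    (hω : ∀ n : ℕ, (1 + α) * (n + 1) * ω (n + 1) + 2 * α ^ 2 * ∑ m ∈ range (n + 1), ω m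
      = (1 - α) * n * ω n)
    (n : ℕ) : 0 < ∑ m ∈ range (n + 1), ω m := by
  set S : ℕ → ℝ := fun n => ∑ m ∈ range (n + 1), ω m
  have hSsucc (n : ℕ) : S (n + 1) = S n + ω (n + 1) := sum_range_succ ω (n + 1)
  suffices key : ∀ n, 0 < S n ∧ (1 - α) * S n ≤ (1 + α) * S (n + 1) from (key n).1
  intro n
  induction n with
  | zero =>
    have hS₀ : S 0 = ω 0 := sum_range_one ω
    have h := hω 0
    simp only [Nat.cast_zero, zero_add, mul_one, mul_zero, zero_mul] at h
    refine ⟨hS₀ ▸ hω₀, ?_⟩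
    rw [hSsucc, hS₀]
    nlinarith [mul_nonneg (mul_nonneg hα₀ (sub_nonneg.2 hα₁.le)) hω₀.le]
  | succ n ih =>
    obtain ⟨hSn, hstep⟩ := ih
    have hSn₁ : 0 < S (n + 1) := by nlinarith
    refine ⟨hSn₁, ?_⟩
    have h := hω (n + 1)
    rw [show ω (n + 1 + 1) = S (n + 2) - S (n + 1) by rw [hSsucc (n + 1)]; ring,
      show ω (n + 1) = S (n + 1) - S n by rw [hSsucc n]; ring] at h
    push_cast at h
    nlinarith [mul_le_mul_of_nonneg_left hstep (by positivity : (0 : ℝ) ≤ n + 1),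
      mul_nonneg (mul_nonneg hα₀ (sub_nonneg.2 hα₁.le)) hSn₁.le]

theorem sftrW_one {α : ℝ} (hα : 0 < α) :
    sftrW α 1 = -α * (2 * α / (α + 1)) * sftrW α 0 := by
  rw [sftrW, sftrW, Real.rpow_add_one (by positivity)]
  ring

theorem sftrW_zero_pos {α : ℝ} (hα : 0 < α) : 0 < sftrW α 0 := by
  rw [sftrW]
  positivity

theorem sftrW_add_two {α : ℝ} (hα : α ≠ 0) (hα' : α + 1 ≠ 0) (n : ℕ) :
    ((n : ℝ) + 2) * (α + 1) * sftrW α (n + 2)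
      = (2 * ((n : ℝ) + 1) - 2 * α ^ 2) * sftrW α (n + 1) + (α - 1) * n * sftrW α n := by
  rw [sftrW]
  field_simp
  ring

theorem sftrW_mul_succ_add_sum_eq {α : ℝ} (hα : 0 < α) (n : ℕ) :
    (1 + α) * (n + 1) * sftrW α (n + 1) + 2 * α ^ 2 * ∑ m ∈ range (n + 1), sftrW α m
      = (1 - α) * n * sftrW α n := by
  induction n with
  | zero =>
    rw [sftrW_one hα, sum_range_one]
    field_simp
    ring
  | succ n ih =>
    rw [sum_range_succ]
    push_cast at ih ⊢
    linear_combination ih + sftrW_add_two hα.ne' (by positivity) n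

theorem sftrW_partial_sum_pos (α : ℝ) (hα : α ∈ Set.Ioo (0 : ℝ) 1) :
    ∀ n : ℕ, 0 < ∑ m ∈ Finset.range (n + 1), sftrW α m :=
  sum_range_pos_of_mul_succ_add_sum_eq hα.1.le hα.2 (sftrW_zero_pos hα.1)
    (sftrW_mul_succ_add_sum_eq hα.1)
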